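/- arXiv:2310.12422 — 2 statements merged into one kernel-verified Lean document; each statement's English description precedes it below -/
import Mathlib

section
/- Let M ≥ 1, let Ã₁, …, Ã_M ∈ ℝ^{N×N}, let 1 ≤ k ≤ N, and set 𝑁 = Σ_{m=1}^{M} Ã_m Ã_mᵀ, which is symmetric positive semidefinite with eigenvalues λ₁ ≥ … ≥ λ_N in descending order. Then the minimum of Σ_{m=1}^{M} ‖Ã_m − U V_mᵀ‖_F² over all U ∈ ℝ^{N×k} with UᵀU = I_k and all V₁, …, V_M ∈ ℝ^{N×k} equals Σ_{m=1}^{M} ‖Ã_m‖_F² − (λ₁ + … + λ_k), and this minimum is attained by taking the columns of U to be orthonormal eigenvectors of 𝑁 associated with the k largest eigenvalues and V_m = Ã_mᵀ U. -/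
/-!
For semi-orthogonal `U`, `‖A - U Vᵀ‖² = ‖A‖² - tr (Uᵀ A Aᵀ U) + ‖Vᵀ - Uᵀ A‖²`, so the best `V`
for a given `U` is `Aᵀ U`, and the problem becomes maximising `tr (Uᵀ 𝑁 U)`. Writing
`𝑁 = W diag(λ) Wᵀ` with `W` orthogonal, this trace is `∑ λᵢ cᵢ` where `cᵢ` is the squared norm of
the `i`-th row of `Wᵀ U`; these weights lie in `[0, 1]` and sum to `k`, so the trace is at most
`λ₁ + ⋯ + λ_k` (Ky Fan), with equality for `U` made of the top `k` eigenvectors.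
-/

open Matrix BigOperators

noncomputable def frobNorm {p q : ℕ} (M : Matrix (Fin p) (Fin q) ℝ) : ℝ :=
  Real.sqrt (M * Mᵀ).trace

variable {m n κ : Type*} [Fintype m] [Fintype n] [Fintype κ]

lemma trace_mul_transpose_eq_sum_sq (M : Matrix m n ℝ) :
    (M * Mᵀ).trace = ∑ i, ∑ j, M i j ^ 2 := by
  simp [trace, mul_apply, sq]

lemma frobNorm_sq {p q : ℕ} (M : Matrix (Fin p) (Fin q) ℝ) :
    frobNorm M ^ 2 = (M * Mᵀ).trace :=
  Real.sq_sqrt <| (trace_mul_transpose_eq_sum_sq M).symm ▸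
    Finset.sum_nonneg fun _ _ => Finset.sum_nonneg fun _ _ => sq_nonneg _

lemma frobNorm_sub_mul_transpose_sq {p q k : ℕ} {U : Matrix (Fin p) (Fin k) ℝ}
    (hU : Uᵀ * U = 1) (A : Matrix (Fin p) (Fin q) ℝ) (V : Matrix (Fin q) (Fin k) ℝ) :
    frobNorm (A - U * Vᵀ) ^ 2
      = frobNorm A ^ 2 - (Uᵀ * (A * Aᵀ) * U).trace + frobNorm (Vᵀ - Uᵀ * A) ^ 2 := by
  simp only [frobNorm_sq, transpose_sub, transpose_mul, transpose_transpose, Matrix.sub_mul,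
    Matrix.mul_sub, trace_sub]
  have h₁ : (U * Vᵀ * Aᵀ).trace = (Vᵀ * (Aᵀ * U)).trace := by
    rw [Matrix.mul_assoc, trace_mul_comm, Matrix.mul_assoc]
  have h₂ : (A * (V * Uᵀ)).trace = (Uᵀ * A * V).trace := by
    rw [← Matrix.mul_assoc, trace_mul_comm, Matrix.mul_assoc]
  have h₃ : (U * Vᵀ * (V * Uᵀ)).trace = (Vᵀ * V).trace := by
    rw [trace_mul_comm, Matrix.mul_assoc, ← Matrix.mul_assoc Uᵀ, hU, Matrix.one_mul,
      trace_mul_comm]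
  rw [h₁, h₂, h₃]
  simp only [Matrix.mul_assoc]
  ring

lemma sum_frobNorm_sub_mul_transpose_sq {ι : Type*} [Fintype ι] {p q k : ℕ}
    {U : Matrix (Fin p) (Fin k) ℝ} (hU : Uᵀ * U = 1) (A : ι → Matrix (Fin p) (Fin q) ℝ)
    (V : ι → Matrix (Fin q) (Fin k) ℝ) :
    ∑ i, frobNorm (A i - U * (V i)ᵀ) ^ 2
      = ∑ i, frobNorm (A i) ^ 2 - (Uᵀ * (∑ i, A i * (A i)ᵀ) * U).trace
        + ∑ i, frobNorm ((V i)ᵀ - Uᵀ * A i) ^ 2 := by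
  simp only [frobNorm_sub_mul_transpose_sq hU, Finset.sum_add_distrib, Finset.sum_sub_distrib,
    Matrix.mul_sum, Matrix.sum_mul, trace_sum]

lemma sum_sq_le_one_of_transpose_mul_self_eq_one [DecidableEq κ] {B : Matrix m κ ℝ}
    (hB : Bᵀ * B = 1) (i : m) : ∑ j, B i j ^ 2 ≤ 1 := by
  -- `P = B Bᵀ` is a symmetric idempotent, so `P i i = ∑ l, P i l ^ 2 ≥ P i i ^ 2`.
  set P := B * Bᵀ
  have hP : P * P = P := by
    simp only [P, Matrix.mul_assoc, ← Matrix.mul_assoc Bᵀ, hB, Matrix.one_mul]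
  have hPii : P i i = ∑ j, B i j ^ 2 := by simp [P, mul_apply, sq]
  have hPsymm : ∀ l, P l i = P i l := fun l => by simp [P, mul_apply, mul_comm]
  have : P i i ^ 2 ≤ P i i := calc
    P i i ^ 2 ≤ ∑ l, P i l ^ 2 :=
      Finset.single_le_sum (f := fun l => P i l ^ 2) (fun _ _ => sq_nonneg _) (Finset.mem_univ i)
    _ = P i i := by
      conv_rhs => rw [← hP]
      simp [mul_apply, hPsymm, sq]
  nlinarith [hPii ▸ Finset.sum_nonneg fun j (_ : j ∈ Finset.univ) => sq_nonneg (B i j)]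

lemma trace_transpose_mul_diagonal_mul [DecidableEq m] (B : Matrix m κ ℝ) (d : m → ℝ) :
    (Bᵀ * diagonal d * B).trace = ∑ i, d i * ∑ j, B i j ^ 2 := by
  simp only [trace, diag, mul_apply, diagonal_apply, transpose_apply, mul_ite, mul_zero,
    Finset.sum_ite_eq', Finset.mem_univ, if_true, Finset.mul_sum]
  rw [Finset.sum_comm]
  exact Finset.sum_congr rfl fun _ _ => Finset.sum_congr rfl fun _ _ => by ring

lemma sum_mul_le_sum_castLE_of_antitone {N k : ℕ} (hkN : k ≤ N) {lam : Fin N → ℝ}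
    (hlam : Antitone lam) {c : Fin N → ℝ} (hc₀ : ∀ i, 0 ≤ c i) (hc₁ : ∀ i, c i ≤ 1)
    (hc : ∑ i, c i = k) :
    ∑ i, c i * lam i ≤ ∑ j : Fin k, lam (Fin.castLE hkN j) := by
  set S := Finset.univ.map (Fin.castLEEmb hkN)
  have hS : ∀ i, i ∈ S ↔ (i : ℕ) < k := fun i => by
    simpa [S] using ⟨fun ⟨a, ha⟩ => ha ▸ a.2, fun h => ⟨⟨i, h⟩, rfl⟩⟩
  set d : Fin N → ℝ := fun i => if i ∈ S then 1 else 0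
  have hd : ∑ i, d i * lam i = ∑ j : Fin k, lam (Fin.castLE hkN j) := by
    simp only [d, ite_mul, one_mul, zero_mul]
    rw [Finset.sum_ite_mem, Finset.univ_inter, Finset.sum_map]
    rfl
  have hdc : ∑ i, (d i - c i) = 0 := by
    rw [Finset.sum_sub_distrib, hc, Finset.sum_ite_mem, Finset.univ_inter, Finset.sum_const,
      Finset.card_map, Finset.card_univ, Fintype.card_fin, nsmul_one, sub_self]
  -- Since `∑ (d i - c i) = 0`, the difference of the two sides is `∑ (d i - c i) * (lam i - t)`,
  -- and every term is nonnegative once `t` separates `lam` on `S` from `lam` off `S`.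
  obtain ⟨t, ht_mem, ht_not_mem⟩ : ∃ t, (∀ i : Fin N, i ∈ S → t ≤ lam i) ∧
      ∀ i : Fin N, i ∉ S → lam i ≤ t := by
    by_cases hk : k < N
    · exact ⟨lam ⟨k, hk⟩, fun i hi => hlam (Fin.le_def.2 ((hS i).1 hi).le),
        fun i hi => hlam (Fin.le_def.2 (not_lt.1 (mt (hS i).2 hi)))⟩
    · obtain ⟨t, ht⟩ := (Set.finite_range lam).bddBelow
      exact ⟨t, fun i _ => ht ⟨i, rfl⟩, fun i hi => (hi ((hS i).2 (by omega))).elim⟩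
  rw [← hd, ← sub_nonneg, ← Finset.sum_sub_distrib]
  calc (0 : ℝ) = ∑ i, (d i - c i) * t := by rw [← Finset.sum_mul, hdc, zero_mul]
    _ ≤ ∑ i, (d i * lam i - c i * lam i) := Finset.sum_le_sum fun i _ => by
      by_cases hi : i ∈ S
      · simp only [d, if_pos hi]; nlinarith [ht_mem i hi, hc₁ i]
      · simp only [d, if_neg hi]; nlinarith [ht_not_mem i hi, hc₀ i]

namespace Matrix.IsHermitian

variable [DecidableEq n] {A : Matrix n n ℝ} (hA : A.IsHermitian)

lemma eigenvectorUnitary_mul_transpose :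
    (hA.eigenvectorUnitary : Matrix n n ℝ) * (hA.eigenvectorUnitary : Matrix n n ℝ)ᵀ = 1 := by
  simpa [star_eq_conjTranspose] using Unitary.coe_mul_star_self hA.eigenvectorUnitary

lemma transpose_eigenvectorUnitary_mul :
    (hA.eigenvectorUnitary : Matrix n n ℝ)ᵀ * (hA.eigenvectorUnitary : Matrix n n ℝ) = 1 := by
  simpa [star_eq_conjTranspose] using Unitary.coe_star_mul_self hA.eigenvectorUnitary

lemma mul_eigenvectorUnitary :
    A * (hA.eigenvectorUnitary : Matrix n n ℝ)
      = (hA.eigenvectorUnitary : Matrix n n ℝ) * diagonal hA.eigenvalues := by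
  ext i j
  rw [mul_diagonal]
  simpa [mul_apply, mulVec, dotProduct, mul_comm] using congrFun (hA.mulVec_eigenvectorBasis j) i

theorem trace_transpose_mul_mul_le {N k : ℕ} (hkN : k ≤ N) {lam : Fin N → ℝ}
    (hlam : Antitone lam) {e : Fin N ≃ n} (he : lam = hA.eigenvalues ∘ e)
    {U : Matrix n (Fin k) ℝ} (hU : Uᵀ * U = 1) :
    (Uᵀ * A * U).trace ≤ ∑ j : Fin k, lam (Fin.castLE hkN j) := by
  subst he
  set W : Matrix n n ℝ := ↑hA.eigenvectorUnitary
  set B := Wᵀ * U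
  have hB : Bᵀ * B = 1 := by
    simp only [B, W, transpose_mul, transpose_transpose, Matrix.mul_assoc,
      ← Matrix.mul_assoc (hA.eigenvectorUnitary : Matrix n n ℝ),
      hA.eigenvectorUnitary_mul_transpose, Matrix.one_mul, hU]
  have htrace : (Uᵀ * A * U).trace = ∑ i, hA.eigenvalues i * ∑ j, B i j ^ 2 := by
    have hA_eq : A = W * diagonal hA.eigenvalues * Wᵀ := by
      rw [← hA.mul_eigenvectorUnitary, Matrix.mul_assoc, hA.eigenvectorUnitary_mul_transpose,
        Matrix.mul_one]
    conv_lhs => rw [hA_eq]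
    rw [← trace_transpose_mul_diagonal_mul]
    simp only [B, transpose_mul, transpose_transpose, Matrix.mul_assoc]
  have hweights : ∑ i, ∑ j, B i j ^ 2 = k := by
    rw [← trace_mul_transpose_eq_sum_sq, trace_mul_comm, hB, trace_one, Fintype.card_fin]
  rw [htrace, ← e.sum_comp]
  simp only [Function.comp_apply, mul_comm (hA.eigenvalues _)]
  exact sum_mul_le_sum_castLE_of_antitone hkN hlam
    (fun _ => Finset.sum_nonneg fun _ _ => sq_nonneg _)
    (fun _ => sum_sq_le_one_of_transpose_mul_self_eq_one hB _)
    (by rw [e.sum_comp (fun i => ∑ j, B i j ^ 2), hweights])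

theorem exists_transpose_mul_self_eq_one_and_mul_eq_mul_diagonal [DecidableEq κ] {f : κ → n}
    (hf : Function.Injective f) :
    ∃ U : Matrix n κ ℝ, Uᵀ * U = 1 ∧ A * U = U * diagonal (hA.eigenvalues ∘ f) := by
  set W : Matrix n n ℝ := ↑hA.eigenvectorUnitary
  refine ⟨W.submatrix id f, ?_, ?_⟩
  · rw [transpose_submatrix, ← submatrix_mul _ _ _ _ _ Function.bijective_id,
      hA.transpose_eigenvectorUnitary_mul, submatrix_one _ hf]
  · ext i j
    have h := congrFun (congrFun hA.mul_eigenvectorUnitary i) (f j)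
    rw [mul_diagonal] at h ⊢
    simpa [W, mul_apply] using h

end Matrix.IsHermitian

theorem isLeast_sum_frobNorm_sq_low_rank_approx_general
    (M N k : ℕ) (hkN : k ≤ N)
    (A : Fin M → Matrix (Fin N) (Fin N) ℝ)
    (Nmat : Matrix (Fin N) (Fin N) ℝ) (hNmat : Nmat = ∑ m : Fin M, A m * (A m)ᵀ)
    (hH : Nmat.IsHermitian)
    (lam : Fin N → ℝ) (hanti : Antitone lam)
    (hlam : ∃ e : Fin N ≃ Fin N, lam = hH.eigenvalues ∘ e) :
    IsLeast {t : ℝ | ∃ (U : Matrix (Fin N) (Fin k) ℝ) (V : Fin M → Matrix (Fin N) (Fin k) ℝ),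
        Uᵀ * U = 1 ∧ t = ∑ m : Fin M, (frobNorm (A m - U * (V m)ᵀ)) ^ 2}
      (∑ m : Fin M, (frobNorm (A m)) ^ 2 - ∑ i : Fin k, lam (Fin.castLE hkN i)) ∧
    ∃ U : Matrix (Fin N) (Fin k) ℝ, Uᵀ * U = 1 ∧
      (∀ j : Fin k,
        Nmat.mulVec (fun i => U i j) = lam (Fin.castLE hkN j) • (fun i => U i j)) ∧
      ∑ m : Fin M, (frobNorm (A m - U * ((A m)ᵀ * U)ᵀ)) ^ 2
        = ∑ m : Fin M, (frobNorm (A m)) ^ 2 - ∑ i : Fin k, lam (Fin.castLE hkN i) := by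
  obtain ⟨e, hlam⟩ := hlam
  obtain ⟨U₀, hU₀, hNU₀⟩ := hH.exists_transpose_mul_self_eq_one_and_mul_eq_mul_diagonal
    (e.injective.comp (Fin.castLE_injective hkN))
  rw [← Function.comp_assoc, ← hlam] at hNU₀
  have hopt : ∑ m, frobNorm (A m - U₀ * ((A m)ᵀ * U₀)ᵀ) ^ 2
      = ∑ m, frobNorm (A m) ^ 2 - ∑ i : Fin k, lam (Fin.castLE hkN i) := by
    rw [sum_frobNorm_sub_mul_transpose_sq hU₀, ← hNmat, Matrix.mul_assoc, hNU₀,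
      ← Matrix.mul_assoc, hU₀, Matrix.one_mul, trace_diagonal]
    simp [transpose_mul, frobNorm]
  refine ⟨⟨⟨U₀, _, hU₀, hopt.symm⟩, ?_⟩, U₀, hU₀, fun j => ?_, hopt⟩
  · rintro _ ⟨U, V, hU, rfl⟩
    rw [sum_frobNorm_sub_mul_transpose_sq hU, ← hNmat]
    have hkyFan := hH.trace_transpose_mul_mul_le hkN hanti hlam hU
    have hresidual := Finset.sum_nonneg fun m (_ : m ∈ Finset.univ) =>
      sq_nonneg (frobNorm ((V m)ᵀ - Uᵀ * A m))
    linarith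
  · ext i
    have h := congrFun (congrFun hNU₀ i) j
    rw [mul_diagonal] at h
    simpa [mul_apply, mulVec, dotProduct, mul_comm] using h

/-- **Optimal low-rank approximation of a family of matrices.** With
`𝑁 = ∑ m, A m * (A m)ᵀ` (symmetric positive semidefinite) having eigenvalues `lam` in
descending order, the minimum of `∑ m, ‖A m − U * (V m)ᵀ‖_F²` over all semi-orthogonal
`U ∈ ℝ^{N×k}` and all `V₁, …, V_M ∈ ℝ^{N×k}` equals `∑ m, ‖A m‖_F² − (λ₁ + ⋯ + λ_k)`,
and the minimum is attained by taking the columns of `U` to be orthonormal eigenvectors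
of `𝑁` for the `k` largest eigenvalues and `V m = (A m)ᵀ * U`. -/
theorem isLeast_sum_frobNorm_sq_low_rank_approx
    (M N k : ℕ) (hM : 1 ≤ M) (hk1 : 1 ≤ k) (hkN : k ≤ N)
    (A : Fin M → Matrix (Fin N) (Fin N) ℝ)
    (Nmat : Matrix (Fin N) (Fin N) ℝ) (hNmat : Nmat = ∑ m : Fin M, A m * (A m)ᵀ)
    (hH : Nmat.IsHermitian) (hpsd : Nmat.PosSemidef)
    (lam : Fin N → ℝ) (hanti : Antitone lam)
    (hlam : ∃ e : Fin N ≃ Fin N, lam = hH.eigenvalues ∘ e) :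
    IsLeast {t : ℝ | ∃ (U : Matrix (Fin N) (Fin k) ℝ) (V : Fin M → Matrix (Fin N) (Fin k) ℝ),
        Uᵀ * U = 1 ∧ t = ∑ m : Fin M, (frobNorm (A m - U * (V m)ᵀ)) ^ 2}
      (∑ m : Fin M, (frobNorm (A m)) ^ 2 - ∑ i : Fin k, lam (Fin.castLE hkN i)) ∧
    ∃ U : Matrix (Fin N) (Fin k) ℝ, Uᵀ * U = 1 ∧
      (∀ j : Fin k,
        Nmat.mulVec (fun i => U i j) = lam (Fin.castLE hkN j) • (fun i => U i j)) ∧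
      ∑ m : Fin M, (frobNorm (A m - U * ((A m)ᵀ * U)ᵀ)) ^ 2
        = ∑ m : Fin M, (frobNorm (A m)) ^ 2 - ∑ i : Fin k, lam (Fin.castLE hkN i) :=
  isLeast_sum_frobNorm_sq_low_rank_approx_general M N k hkN A Nmat hNmat hH lam hanti hlam
end

section
/- Let B ∈ ℝ^{N×N} with singular values σ₁ ≥ σ₂ ≥ … ≥ σ_N ≥ 0 (the square roots of the eigenvalues of BᵀB listed in descending order with multiplicity), and let 0 ≤ k ≤ N. Then for every matrix X ∈ ℝ^{N×N} with rank(X) ≤ k, one has ‖B − X‖_F² ≥ σ_{k+1}² + σ_{k+2}² + … + σ_N². -/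
open Matrix BigOperators

/-!
Since `rank X ≤ k`, the kernel of `X` contains `N - k` orthonormal vectors: the columns of some
`U` with `Uᵀ * U = 1` and `X * U = 0`. Then `(B - X) * U = B * U`, and multiplying by `U` does not
increase the Frobenius norm, so `‖B - X‖_F² ≥ tr (Uᵀ * (Bᵀ * B) * U)`. Diagonalising
`Bᵀ * B = Q * diagonal λ * Qᵀ`, this trace is `∑ λᵢ tᵢ` with weights `tᵢ = (Qᵀ U Uᵀ Q)ᵢᵢ ∈ [0, 1]`
summing to `N - k`, and such a weighted sum is at least the sum of the `N - k` smallest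
eigenvalues.
-/

open Finset

theorem frobNorm_sq_eq_trace {p q : ℕ} (M : Matrix (Fin p) (Fin q) ℝ) :
    frobNorm M ^ 2 = (Mᵀ * M).trace := by
  have h := (posSemidef_self_mul_conjTranspose M).trace_nonneg
  rw [conjTranspose_eq_transpose_of_trivial] at h
  rw [frobNorm, Real.sq_sqrt h, trace_mul_comm]

theorem Finset.sum_le_sum_mul_of_sum_eq_card {ι : Type*} [Fintype ι] {s : Finset ι}
    {μ t : ι → ℝ} (hμ : ∀ i ∈ s, ∀ j ∉ s, μ i ≤ μ j) (ht₀ : ∀ i, 0 ≤ t i)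
    (ht₁ : ∀ i, t i ≤ 1) (ht : ∑ i, t i = #s) :
    ∑ i ∈ s, μ i ≤ ∑ i, μ i * t i := by
  classical
  rcases s.eq_empty_or_nonempty with rfl | hs
  · have : ∀ i, t i = 0 := by
      simpa [Finset.sum_eq_zero_iff_of_nonneg fun i _ => ht₀ i] using ht
    simp [this]
  set c := s.sup' hs μ
  have key : ∀ i, 0 ≤ (μ i - c) * (t i - if i ∈ s then 1 else 0) := by
    intro i
    split_ifs with hi
    · exact mul_nonneg_of_nonpos_of_nonpos (sub_nonpos.2 (s.le_sup' μ hi)) (by linarith [ht₁ i])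
    · exact mul_nonneg (sub_nonneg.2 (s.sup'_le hs μ fun j hj => hμ j hj i hi))
        (by linarith [ht₀ i])
  have hsum := sum_nonneg fun i (_ : i ∈ univ) => key i
  simp only [mul_sub, sub_mul, mul_ite, mul_one, mul_zero, sum_sub_distrib, ← mul_sum,
    sum_ite_mem, univ_inter, ht, sum_const, nsmul_eq_mul] at hsum
  linarith

theorem Fin.card_filter_le_val (n m : ℕ) : #{i : Fin n | m ≤ (i : ℕ)} = n - m := by
  have := card_filter_add_card_filter_not (s := univ) fun i : Fin n => (i : ℕ) < m
  simp only [not_lt, card_univ, Fintype.card_fin, Fin.card_filter_val_lt] at this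
  omega

namespace Matrix

variable {l m n : Type*} [Fintype l] [Fintype m] [Fintype n] [DecidableEq m] [DecidableEq n]

theorem mul_transpose_apply_self_le_one_of_transpose_mul_self_eq_one {U : Matrix n m ℝ}
    (hU : Uᵀ * U = 1) (i : n) : (U * Uᵀ) i i ≤ 1 := by
  have hP : (1 - U * Uᵀ)ᵀ * (1 - U * Uᵀ) = 1 - U * Uᵀ := by
    simp only [transpose_sub, transpose_one, transpose_mul, transpose_transpose, sub_mul, mul_sub,
      one_mul, mul_one]
    rw [← Matrix.mul_assoc, Matrix.mul_assoc U, hU, Matrix.mul_one]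
    abel
  have := (posSemidef_conjTranspose_mul_self (1 - U * Uᵀ)).diag_nonneg (i := i)
  rw [conjTranspose_eq_transpose_of_trivial, hP] at this
  simpa using this

theorem IsHermitian.exists_trace_transpose_mul_mul_eq_sum {A : Matrix n n ℝ} (hA : A.IsHermitian)
    {U : Matrix n m ℝ} (hU : Uᵀ * U = 1) :
    ∃ t : n → ℝ, (∀ i, 0 ≤ t i) ∧ (∀ i, t i ≤ 1) ∧ ∑ i, t i = Fintype.card m ∧
      (Uᵀ * A * U).trace = ∑ i, hA.eigenvalues i * t i := by
  set Q : Matrix n n ℝ := (hA.eigenvectorUnitary : Matrix n n ℝ)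
  have hQ : Q * Qᵀ = 1 := by
    simpa [Q, star_eq_conjTranspose] using Unitary.mul_star_self_of_mem hA.eigenvectorUnitary.2
  have hA' : A = Q * diagonal hA.eigenvalues * Qᵀ := by
    simpa [Q, Unitary.conjStarAlgAut_apply, star_eq_conjTranspose] using hA.spectral_theorem
  set W := Qᵀ * U
  have hW : Wᵀ * W = 1 := by
    rw [transpose_mul, transpose_transpose, Matrix.mul_assoc, ← Matrix.mul_assoc Q, hQ,
      Matrix.one_mul, hU]
  refine ⟨fun i => (W * Wᵀ) i i, fun i => ?_,
    mul_transpose_apply_self_le_one_of_transpose_mul_self_eq_one hW, ?_, ?_⟩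
  · simpa [conjTranspose_eq_transpose_of_trivial] using
      (posSemidef_self_mul_conjTranspose W).diag_nonneg (i := i)
  · change (W * Wᵀ).trace = _
    rw [trace_mul_comm, hW, trace_one]
  · calc (Uᵀ * A * U).trace = (Wᵀ * diagonal hA.eigenvalues * W).trace := by
          simp only [hA', W, transpose_mul, transpose_transpose, Matrix.mul_assoc]
      _ = (diagonal hA.eigenvalues * (W * Wᵀ)).trace := by
          rw [Matrix.mul_assoc, trace_mul_comm, Matrix.mul_assoc]
      _ = ∑ i, hA.eigenvalues i * (W * Wᵀ) i i := by
          simp only [trace, diag_apply, diagonal_mul]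

theorem PosSemidef.trace_transpose_mul_mul_le {A : Matrix n n ℝ} (hA : A.PosSemidef)
    {U : Matrix n m ℝ} (hU : Uᵀ * U = 1) : (Uᵀ * A * U).trace ≤ A.trace := by
  obtain ⟨t, -, ht₁, -, htr⟩ := hA.isHermitian.exists_trace_transpose_mul_mul_eq_sum hU
  rw [htr, hA.isHermitian.trace_eq_sum_eigenvalues]
  exact sum_le_sum fun i _ => mul_le_of_le_one_right (hA.eigenvalues_nonneg i) (ht₁ i)

theorem exists_transpose_mul_self_eq_one_and_mul_eq_zero (X : Matrix l n ℝ) {r : ℕ}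
    (hr : r + X.rank ≤ Fintype.card n) :
    ∃ U : Matrix n (Fin r) ℝ, Uᵀ * U = 1 ∧ X * U = 0 := by
  set T := toEuclideanLin X
  have hK : r ≤ Module.finrank ℝ (LinearMap.ker T) := by
    have hrank : X.rank = Module.finrank ℝ (LinearMap.range T) := by
      rw [rank_eq_finrank_range_toLin X (EuclideanSpace.basisFun l ℝ).toBasis
        (EuclideanSpace.basisFun n ℝ).toBasis, ← toEuclideanLin_eq_toLin_orthonormal]
    have := LinearMap.finrank_range_add_finrank_ker T
    rw [← hrank, finrank_euclideanSpace] at this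
    omega
  set b := stdOrthonormalBasis ℝ (LinearMap.ker T)
  set u : Fin r → EuclideanSpace ℝ n := fun j => (b (Fin.castLE hK j) : LinearMap.ker T)
  have hu : Orthonormal ℝ u :=
    (b.orthonormal.comp _ (Fin.castLE_injective hK)).comp_linearIsometry
      (LinearMap.ker T).subtypeₗᵢ
  refine ⟨of fun i j => u j i, ?_, ?_⟩
  · ext a c
    rw [one_apply, ← orthonormal_iff_ite.1 hu a c]
    simp only [mul_apply, transpose_apply, of_apply, PiLp.inner_apply, RCLike.inner_apply,
      conj_trivial]
    exact sum_congr rfl fun _ _ => mul_comm _ _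
  · ext i j
    have : T (u j) = 0 := (b (Fin.castLE hK j)).2
    simpa [T, mul_apply, mulVec, dotProduct] using congr($this i)

end Matrix

theorem eckart_young_lower_bound_general
    (N k : ℕ)
    (B : Matrix (Fin N) (Fin N) ℝ)
    (hH : (Bᵀ * B).IsHermitian)
    (σ : Fin N → ℝ) (hanti : Antitone σ) (hnonneg : ∀ i, 0 ≤ σ i)
    (hσ : ∃ e : Fin N ≃ Fin N, (fun i => σ i ^ 2) = hH.eigenvalues ∘ e)
    (X : Matrix (Fin N) (Fin N) ℝ) (hX : X.rank ≤ k) :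
    ∑ i ∈ Finset.univ.filter (fun i : Fin N => k ≤ (i : ℕ)), σ i ^ 2
      ≤ (frobNorm (B - X)) ^ 2 := by
  obtain ⟨e, he⟩ := hσ
  have he' : ∀ i, σ i ^ 2 = hH.eigenvalues (e i) := congrFun he
  set s := univ.filter fun i : Fin N => k ≤ (i : ℕ) with hs_def
  have hs : #s + X.rank ≤ Fintype.card (Fin N) := by
    rw [hs_def, Fin.card_filter_le_val, Fintype.card_fin]
    have := X.rank_le_width
    omega
  obtain ⟨U, hU, hXU⟩ := exists_transpose_mul_self_eq_one_and_mul_eq_zero X hs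
  obtain ⟨t, ht₀, ht₁, hts, htr⟩ := hH.exists_trace_transpose_mul_mul_eq_sum hU
  have hσs : ∀ i ∈ s, ∀ j ∉ s, σ i ^ 2 ≤ σ j ^ 2 := fun i hi j hj => by
    simp only [s, mem_filter, mem_univ, true_and, not_le] at hi hj
    exact pow_le_pow_left₀ (hnonneg i) (hanti (Fin.le_def.2 (by omega))) 2
  calc ∑ i ∈ s, σ i ^ 2
      ≤ ∑ i, σ i ^ 2 * t (e i) := sum_le_sum_mul_of_sum_eq_card hσs (fun _ => ht₀ _)
        (fun _ => ht₁ _) (by rw [Equiv.sum_comp e t, hts, Fintype.card_fin])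
    _ = (Uᵀ * (Bᵀ * B) * U).trace := by
        rw [htr, ← Equiv.sum_comp e (fun i => hH.eigenvalues i * t i)]
        simp only [he']
    _ = (Uᵀ * ((B - X)ᵀ * (B - X)) * U).trace := by
        have hBU : (B - X) * U = B * U := by rw [Matrix.sub_mul, hXU, sub_zero]
        rw [show Uᵀ * (Bᵀ * B) * U = (B * U)ᵀ * (B * U) by
          simp only [transpose_mul, Matrix.mul_assoc], ← hBU]
        simp only [transpose_mul, Matrix.mul_assoc]
    _ ≤ ((B - X)ᵀ * (B - X)).trace :=
        (posSemidef_conjTranspose_mul_self (B - X)).trace_transpose_mul_mul_le hU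
    _ = frobNorm (B - X) ^ 2 := (frobNorm_sq_eq_trace _).symm

/-- **Eckart–Young lower bound (Frobenius norm).** Let `B ∈ ℝ^{N×N}` with singular values
`σ₁ ≥ ⋯ ≥ σ_N ≥ 0` (square roots of the eigenvalues of `Bᵀ * B` in descending order with
multiplicity) and `0 ≤ k ≤ N`. Then for every `X` of rank at most `k`,
`‖B − X‖_F² ≥ σ_{k+1}² + ⋯ + σ_N²`. -/
theorem eckart_young_lower_bound
    (N k : ℕ) (hkN : k ≤ N)
    (B : Matrix (Fin N) (Fin N) ℝ)
    (hH : (Bᵀ * B).IsHermitian)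
    (σ : Fin N → ℝ) (hanti : Antitone σ) (hnonneg : ∀ i, 0 ≤ σ i)
    (hσ : ∃ e : Fin N ≃ Fin N, (fun i => σ i ^ 2) = hH.eigenvalues ∘ e)
    (X : Matrix (Fin N) (Fin N) ℝ) (hX : X.rank ≤ k) :
    ∑ i ∈ Finset.univ.filter (fun i : Fin N => k ≤ (i : ℕ)), σ i ^ 2
      ≤ (frobNorm (B - X)) ^ 2 :=
  eckart_young_lower_bound_general N k B hH σ hanti hnonneg hσ X hX
end
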